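/- Let φ : M → M' be an R-module epimorphism. If N' is a submodule of M' with β(N') = ⟨E_{M'}(N')⟩, then β(φ^{-1}(N')) = ⟨E_M(φ^{-1}(N'))⟩. -/

import Mathlib

/-- A submodule `P` is completely prime if it is proper and `a • m ∈ P` implies
`m ∈ P` or `a • M ⊆ P`. -/
def IsCompletelyPrimeSubmodule {R : Type*} [Ring R] {M : Type*} [AddCommGroup M] [Module R M]
    (P : Submodule R M) : Prop :=
  P ≠ ⊤ ∧ ∀ (a : R) (m : M), a • m ∈ P → m ∈ P ∨ ∀ x : M, a • x ∈ P

/-- A submodule `P` is prime if it is proper and for every two-sided ideal `A` of `R`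
and submodule `N`, `A N ⊆ P` implies `N ⊆ P` or `A M ⊆ P`. -/
def IsPrimeSubmodule {R : Type*} [Ring R] {M : Type*} [AddCommGroup M] [Module R M]
    (P : Submodule R M) : Prop :=
  P ≠ ⊤ ∧ ∀ (A : TwoSidedIdeal R) (N : Submodule R M),
    (∀ a ∈ A, ∀ n ∈ N, a • n ∈ P) → N ≤ P ∨ ∀ a ∈ A, ∀ x : M, a • x ∈ P

/-- The prime radical `β(N)`: the intersection of all prime submodules containing `N`
(equal to `⊤ = M` if there are none). -/
def primeRadical {R : Type*} [Ring R] {M : Type*} [AddCommGroup M] [Module R M]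
    (N : Submodule R M) : Submodule R M :=
  sInf {P | IsPrimeSubmodule P ∧ N ≤ P}

/-- The completely prime radical `β_co(N)`: the intersection of all completely prime
submodules containing `N` (equal to `⊤ = M` if there are none). -/
def cpRadical {R : Type*} [Ring R] {M : Type*} [AddCommGroup M] [Module R M]
    (N : Submodule R M) : Submodule R M :=
  sInf {P | IsCompletelyPrimeSubmodule P ∧ N ≤ P}

/-- The envelope `E_M(N) = {r • m : r^k • m ∈ N for some positive integer k}`. -/
def envelope {R : Type*} [Ring R] {M : Type*} [AddCommGroup M] [Module R M]
    (N : Submodule R M) : Set M :=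
  {x | ∃ (r : R) (m : M) (k : ℕ), 0 < k ∧ r ^ k • m ∈ N ∧ x = r • m}

/-- A submodule `N` is completely semiprime if `a ^ 2 • m ∈ N` implies `a • m ∈ N`. -/
def IsCompletelySemiprimeSubmodule {R : Type*} [Ring R] {M : Type*} [AddCommGroup M]
    [Module R M] (N : Submodule R M) : Prop :=
  ∀ (a : R) (m : M), a ^ 2 • m ∈ N → a • m ∈ N

/-!
For surjective `φ`, the maps `P ↦ φ(P)` and `P' ↦ φ⁻¹(P')` restrict to mutually inverse
bijections between the prime submodules of `M` containing `ker φ` and the prime submodules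
of `M'`; since `ker φ ⊆ φ⁻¹(N')`, this gives `β(φ⁻¹(N')) = φ⁻¹(β(N'))`. Likewise `φ` maps
`E_M(φ⁻¹(N'))` onto `E_{M'}(N')` and `ker φ ⊆ E_M(φ⁻¹(N'))`, so
`⟨E_M(φ⁻¹(N'))⟩ = φ⁻¹⟨E_{M'}(N')⟩`. Pulling the hypothesis back along `φ` gives the claim.
-/

section

open Submodule

variable {R : Type*} [Ring R] {M M' : Type*} [AddCommGroup M] [Module R M]
  [AddCommGroup M'] [Module R M'] {φ : M →ₗ[R] M'}

theorem IsPrimeSubmodule.comap (hφ : Function.Surjective φ) {P' : Submodule R M'}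
    (hP' : IsPrimeSubmodule P') : IsPrimeSubmodule (P'.comap φ) := by
  obtain ⟨hne, hprime⟩ := hP'
  refine ⟨fun htop => hne ?_, fun A N hAN => ?_⟩
  · rw [← map_comap_eq_of_surjective hφ P', htop, Submodule.map_top, LinearMap.range_eq_top.mpr hφ]
  · have hAN' : ∀ a ∈ A, ∀ n' ∈ N.map φ, a • n' ∈ P' := by
      rintro a ha _ ⟨n, hn, rfl⟩
      simpa using hAN a ha n hn
    rcases hprime A (N.map φ) hAN' with hN | hA
    · exact Or.inl fun n hn => hN (mem_map_of_mem hn)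
    · exact Or.inr fun a ha x => by simpa using hA a ha (φ x)

theorem IsPrimeSubmodule.map (hφ : Function.Surjective φ) {P : Submodule R M}
    (hker : LinearMap.ker φ ≤ P) (hP : IsPrimeSubmodule P) : IsPrimeSubmodule (P.map φ) := by
  obtain ⟨hne, hprime⟩ := hP
  refine ⟨fun htop => hne ?_, fun A N' hAN' => ?_⟩
  · rw [← comap_map_eq_self hker, htop, comap_top]
  · have hAN : ∀ a ∈ A, ∀ n ∈ N'.comap φ, a • n ∈ P := by
      intro a ha n hn
      rw [← comap_map_eq_self hker, mem_comap, map_smul]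
      exact hAN' a ha (φ n) hn
    rcases hprime A (N'.comap φ) hAN with hN | hA
    · exact Or.inl <| map_comap_eq_of_surjective hφ N' ▸ map_mono hN
    · refine Or.inr fun a ha x' => ?_
      obtain ⟨x, rfl⟩ := hφ x'
      rw [← map_smul]
      exact mem_map_of_mem (hA a ha x)

theorem primeRadical_comap (hφ : Function.Surjective φ) (N' : Submodule R M') :
    primeRadical (N'.comap φ) = (primeRadical N').comap φ := by
  refine le_antisymm (fun x hx => ?_) (le_sInf ?_)
  · rw [mem_comap, primeRadical, mem_sInf]
    rintro P' ⟨hP', hNP'⟩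
    exact (mem_sInf.mp hx) _ ⟨hP'.comap hφ, comap_mono hNP'⟩
  · rintro P ⟨hP, hNP⟩
    have hker : LinearMap.ker φ ≤ P := (LinearMap.ker_le_comap φ).trans hNP
    rw [← comap_map_eq_self hker]
    refine comap_mono (sInf_le ⟨hP.map hφ hker, ?_⟩)
    exact map_comap_eq_of_surjective hφ N' ▸ map_mono hNP

theorem subset_envelope (N : Submodule R M) : (N : Set M) ⊆ envelope N :=
  fun m hm => ⟨1, m, 1, one_pos, by simpa using hm, (one_smul R m).symm⟩

theorem image_envelope_comap (hφ : Function.Surjective φ) (N' : Submodule R M') :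
    φ '' envelope (N'.comap φ) = envelope N' := by
  refine subset_antisymm ?_ ?_
  · rintro _ ⟨_, ⟨r, m, k, hk, hm, rfl⟩, rfl⟩
    exact ⟨r, φ m, k, hk, by simpa using hm, map_smul φ r m⟩
  · rintro _ ⟨r, m', k, hk, hm', rfl⟩
    obtain ⟨m, rfl⟩ := hφ m'
    exact ⟨r • m, ⟨r, m, k, hk, by simpa using hm', rfl⟩, map_smul φ r m⟩

theorem span_envelope_comap (hφ : Function.Surjective φ) (N' : Submodule R M') :
    span R (envelope (N'.comap φ)) = (span R (envelope N')).comap φ := by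
  have hker : LinearMap.ker φ ≤ span R (envelope (N'.comap φ)) :=
    (LinearMap.ker_le_comap φ).trans <| (subset_envelope _).trans subset_span
  rw [← image_envelope_comap hφ, ← map_span, comap_map_eq_self hker]

end

/-- (McCasland–Moore) if `φ : M → M'` is an epimorphism and
`β(N') = ⟨E_{M'}(N')⟩`, then `β(φ⁻¹(N')) = ⟨E_M(φ⁻¹(N'))⟩`. -/
theorem radical_formula_comap {R : Type*} [Ring R] {M M' : Type*} [AddCommGroup M]
    [Module R M] [AddCommGroup M'] [Module R M'] (φ : M →ₗ[R] M')
    (hsurj : Function.Surjective φ) (N' : Submodule R M')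
    (h : primeRadical N' = Submodule.span R (envelope N')) :
    primeRadical (N'.comap φ) = Submodule.span R (envelope (N'.comap φ)) := by
  rw [primeRadical_comap hsurj, span_envelope_comap hsurj, h]
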